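/- arXiv:math/0311516 — 5 statements merged into one kernel-verified Lean document; each statement's English description precedes it below -/
import Mathlib

section
/- Let m, n, k, ℓ be positive integers with √m + √n = √k + √ℓ and {m,n} ≠ {k,ℓ}. Then there exist a squarefree positive integer h and positive integers α, β, γ, δ with α + β = γ + δ such that m = α²h, n = β²h, k = γ²h, ℓ = δ²h. -/
/-!
Squaring `√m + √n = √k + √l` shows that `√(mn) - √(kl)` is rational. It vanishes only when
`m + n = k + l` and `mn = kl`, i.e. when `{m, n} = {k, l}`; otherwise squaring once more makes
both roots rational, so `mn` and `kl` are perfect squares. Then `m, n` share a squarefree part `h`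
and `k, l` share one, `h'`, and the equation reads `(α + β) √h = (γ + δ) √h'`; uniqueness of the
decomposition `α² h` forces `h = h'` and `α + β = γ + δ`.
-/

theorem Squarefree.associated_of_isSquare_mul {R : Type*} [CommMonoidWithZero R]
    [IsCancelMulZero R] [DecompositionMonoid R] {a b : R} (ha : Squarefree a) (hb : Squarefree b)
    (hab : IsSquare (a * b)) : Associated a b := by
  nontriviality R
  obtain ⟨s, hs⟩ := hab
  obtain ⟨a', rfl⟩ : s ∣ a := hb.dvd_of_squarefree_of_mul_dvd_mul_left (hs ▸ dvd_rfl)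
  obtain ⟨b', rfl⟩ : s ∣ b := ha.dvd_of_squarefree_of_mul_dvd_mul_right (hs ▸ dvd_rfl)
  have hs0 : s ≠ 0 := left_ne_zero_of_mul ha.ne_zero
  have hunit : a' * b' = 1 := by
    refine mul_left_cancel₀ hs0 (mul_left_cancel₀ hs0 ?_)
    calc s * (s * (a' * b')) = s * a' * (s * b') := by rw [mul_mul_mul_comm, mul_assoc]
      _ = s * (s * 1) := by rw [hs, mul_one]
  exact .mul_left s <| (associated_one_iff_isUnit.2 (IsUnit.of_mul_eq_one _ hunit)).trans
    (associated_one_iff_isUnit.2 (IsUnit.of_mul_eq_one_right _ hunit)).symm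

theorem Nat.isSquare_of_isSquare_sq_mul {a x : ℕ} (ha : a ≠ 0) (h : IsSquare (a ^ 2 * x)) :
    IsSquare x := by
  rw [← Rat.isSquare_natCast_iff] at h ⊢
  have hx : (x : ℚ) = ((a ^ 2 * x : ℕ) : ℚ) / (a : ℚ) ^ 2 := by push_cast; field_simp
  exact hx ▸ h.div (IsSquare.sq _)

theorem Nat.sq_mul_squarefree_unique {a b h h' : ℕ} (hh : Squarefree h) (hh' : Squarefree h')
    (ha : a ≠ 0) (heq : a ^ 2 * h = b ^ 2 * h') : h = h' ∧ a = b := by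
  have hsq : IsSquare (h * h') :=
    Nat.isSquare_of_isSquare_sq_mul ha ⟨b * h', by rw [← mul_assoc, heq]; ring⟩
  obtain rfl : h = h' := associated_iff_eq.mp (hh.associated_of_isSquare_mul hh' hsq)
  exact ⟨rfl, Nat.pow_left_injective two_ne_zero
    (Nat.eq_of_mul_eq_mul_right (Nat.pos_of_ne_zero hh.ne_zero) heq)⟩

theorem Nat.exists_sq_mul_squarefree_of_isSquare_mul {m n : ℕ} (hm : 0 < m) (hn : 0 < n)
    (hmn : IsSquare (m * n)) : ∃ h α β : ℕ, 0 < h ∧ Squarefree h ∧ 0 < α ∧ 0 < β ∧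
      m = α ^ 2 * h ∧ n = β ^ 2 * h := by
  obtain ⟨h, α, hh0, hα, rfl, hh⟩ := Nat.sq_mul_squarefree_of_pos hm
  obtain ⟨h', β, hh'0, hβ, rfl, hh'⟩ := Nat.sq_mul_squarefree_of_pos hn
  obtain ⟨s, hs⟩ := hmn
  obtain ⟨rfl, -⟩ := Nat.sq_mul_squarefree_unique hh hh' (a := α * β * h') (b := s)
    (by positivity) (by rw [show s ^ 2 * h' = s * s * h' by ring, ← hs]; ring)
  exact ⟨h, α, β, hh0, hh, hα, hβ, rfl, rfl⟩

theorem eq_or_eq_swap_of_add_eq_add_of_mul_eq_mul {R : Type*} [CommRing R] [NoZeroDivisors R]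
    {m n k l : R} (hadd : m + n = k + l) (hmul : m * n = k * l) :
    (m, n) = (k, l) ∨ (m, n) = (l, k) := by
  have hroots : (m - k) * (m - l) = 0 := by linear_combination m * hadd - hmul
  simp only [Prod.mk.injEq]
  rcases mul_eq_zero.mp hroots with h | h
  · exact .inl ⟨by linear_combination h, by linear_combination hadd - h⟩
  · exact .inr ⟨by linear_combination h, by linear_combination hadd - h⟩

theorem Real.sqrt_mul_sub_sqrt_mul_of_sqrt_add_eq {x y z w : ℝ} (hx : 0 ≤ x) (hy : 0 ≤ y)
    (hz : 0 ≤ z) (hw : 0 ≤ w) (h : √x + √y = √z + √w) :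
    √(x * y) - √(z * w) = (z + w - x - y) / 2 := by
  have hsq := congrArg (· ^ 2) h
  simp only [add_sq, Real.sq_sqrt, hx, hy, hz, hw] at hsq
  rw [Real.sqrt_mul hx, Real.sqrt_mul hz]
  linarith

theorem Nat.isSquare_of_sqrt_eq_ratCast {n : ℕ} {r : ℚ} (h : √(n : ℝ) = r) : IsSquare n := by
  by_contra hn
  exact (irrational_sqrt_natCast_iff.2 hn).ne_rat r h

theorem Nat.isSquare_and_isSquare_of_sqrt_sub_sqrt_eq_ratCast {x y : ℕ} {q : ℚ} (hxy : x ≠ y)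
    (h : √(x : ℝ) - √(y : ℝ) = q) : IsSquare x ∧ IsSquare y := by
  have hq : (q : ℝ) ≠ 0 := by
    intro hq
    rw [hq, sub_eq_zero, Real.sqrt_inj (by positivity) (by positivity)] at h
    exact hxy (by exact_mod_cast h)
  have hy : √(y : ℝ) = ((x - y - q ^ 2) / (2 * q) : ℚ) := by
    have hsq := congrArg (· ^ 2) (eq_add_of_sub_eq h)
    simp only [add_sq, Real.sq_sqrt (Nat.cast_nonneg _)] at hsq
    push_cast
    field_simp
    linarith
  have hx : √(x : ℝ) = ((x - y - q ^ 2) / (2 * q) + q : ℚ) := by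
    rw [Rat.cast_add, ← hy]
    linarith
  exact ⟨Nat.isSquare_of_sqrt_eq_ratCast hx, Nat.isSquare_of_sqrt_eq_ratCast hy⟩

theorem Real.sqrt_natCast_sq_mul (a h : ℕ) : √((a ^ 2 * h : ℕ) : ℝ) = a * √(h : ℝ) := by
  push_cast
  rw [Real.sqrt_mul (by positivity), Real.sqrt_sq (by positivity)]

theorem sqrt_sum_eq_classification (m n k l : ℕ)
    (hm : 0 < m) (hn : 0 < n) (hk : 0 < k) (hl : 0 < l)
    (heq : Real.sqrt m + Real.sqrt n = Real.sqrt k + Real.sqrt l)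
    (hne : ¬((m, n) = (k, l) ∨ (m, n) = (l, k))) :
    ∃ h α β γ δ : ℕ, 0 < h ∧ Squarefree h ∧ 0 < α ∧ 0 < β ∧ 0 < γ ∧ 0 < δ ∧
      α + β = γ + δ ∧ m = α ^ 2 * h ∧ n = β ^ 2 * h ∧ k = γ ^ 2 * h ∧ l = δ ^ 2 * h := by
  have hdiff := Real.sqrt_mul_sub_sqrt_mul_of_sqrt_add_eq (Nat.cast_nonneg m) (Nat.cast_nonneg n)
    (Nat.cast_nonneg k) (Nat.cast_nonneg l) heq
  have hmul : m * n ≠ k * l := by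
    intro hmul
    rw [show (m : ℝ) * n = k * l by exact_mod_cast hmul, sub_self] at hdiff
    have hadd : m + n = k + l := by exact_mod_cast (by linarith : (m : ℝ) + n = k + l)
    have hpair := eq_or_eq_swap_of_add_eq_add_of_mul_eq_mul
      (by exact_mod_cast hadd : (m : ℤ) + n = k + l) (by exact_mod_cast hmul : (m : ℤ) * n = k * l)
    exact hne (by simpa only [Prod.mk.injEq, Nat.cast_inj] using hpair)
  obtain ⟨hmn, hkl⟩ := Nat.isSquare_and_isSquare_of_sqrt_sub_sqrt_eq_ratCast hmul
    (q := ((k : ℚ) + l - m - n) / 2) (by push_cast; exact hdiff)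
  obtain ⟨h, α, β, hh0, hh, hα, hβ, rfl, rfl⟩ := Nat.exists_sq_mul_squarefree_of_isSquare_mul hm hn hmn
  obtain ⟨h', γ, δ, -, hh', hγ, hδ, rfl, rfl⟩ := Nat.exists_sq_mul_squarefree_of_isSquare_mul hk hl hkl
  have hsqrt : √(((α + β) ^ 2 * h : ℕ) : ℝ) = √(((γ + δ) ^ 2 * h' : ℕ) : ℝ) := by
    simp only [Real.sqrt_natCast_sq_mul] at heq ⊢
    push_cast
    linarith
  rw [Real.sqrt_inj (by positivity) (by positivity), Nat.cast_inj] at hsqrt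
  obtain ⟨rfl, hsum⟩ := Nat.sq_mul_squarefree_unique hh hh' (by positivity) hsqrt
  exact ⟨h, α, β, γ, δ, hh0, hh, hα, hβ, hγ, hδ, hsum, rfl, rfl, rfl, rfl⟩
end

section
/- First derivative test for exponential integrals: let F : [a,b] → ℝ be differentiable with F' monotonic and |F'(x)| ≥ λ > 0 on [a,b]. Then |∫_a^b e^{iF(x)} dx| ≤ 4/λ. -/
/-!
Write `e^{iF} = F'⁻¹ • (e^{iF} F')` and `F'⁻¹ x = ∫ t in (0, λ⁻¹), 1_{t < F'⁻¹ x}`. By Fubini the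
integral becomes an integral over `t ∈ (0, λ⁻¹)` of integrals of the derivative `(-i e^{iF})'`
over the superlevel sets `{F'⁻¹ > t}`. Since `F'` is monotone these sets are intervals, so each
inner integral is a difference of two unimodular numbers, of modulus at most `2`; this gives the
bound `2 / λ`. By Darboux's theorem `F'` has constant sign, and complex conjugation reduces the
case `F' < 0` to `F' > 0`.
-/

open MeasureTheory Set Complex ComplexConjugate

theorem Set.OrdConnected.sep_lt_of_monotoneOn_or_antitoneOn {α β : Type*} [Preorder α]
    [Preorder β] {s : Set α} {g : α → β} (hs : s.OrdConnected)
    (hg : MonotoneOn g s ∨ AntitoneOn g s) (t : β) : {x ∈ s | t < g x}.OrdConnected := by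
  refine ⟨fun x hx y hy z hz => ?_⟩
  have hzs : z ∈ s := hs.out hx.1 hy.1 hz
  refine ⟨hzs, ?_⟩
  rcases hg with hg | hg
  · exact hx.2.trans_le (hg hx.1 hzs hz.1)
  · exact hy.2.trans_le (hg hzs hy.1 hz.2)

theorem Set.OrdConnected.ae_eq_Ioc_csInf_csSup {s : Set ℝ} {μ : Measure ℝ} [NullSingletonClass μ]
    (hs : s.OrdConnected) (hne : s.Nonempty) (hb : BddBelow s) (ha : BddAbove s) :
    s =ᵐ[μ] Ioc (sInf s) (sSup s) :=
  ((subset_Icc_csInf_csSup hb ha).eventuallyLE.trans Ioc_ae_eq_Icc.symm.le).antisymm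
    (Ioo_ae_eq_Ioc.symm.le.trans
      (IsConnected.Ioo_csInf_csSup_subset ⟨hne, hs.isPreconnected⟩ hb ha).eventuallyLE)

theorem Set.Icc_csInf_csSup_subset_Icc {α : Type*} [ConditionallyCompleteLattice α]
    {s : Set α} {a b : α} (hne : s.Nonempty) (hsub : s ⊆ Icc a b) :
    Icc (sInf s) (sSup s) ⊆ Icc a b :=
  Icc_subset_Icc (le_csInf hne fun _ hx => (hsub hx).1) (csSup_le hne fun _ hx => (hsub hx).2)

section

variable {E : Type*} [NormedAddCommGroup E] [NormedSpace ℝ E] [CompleteSpace E]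
  {s : Set ℝ} {a b : ℝ} {h h' : ℝ → E}

theorem Set.OrdConnected.integral_eq_sub_of_hasDerivAt (hs : s.OrdConnected) (hne : s.Nonempty)
    (hsub : s ⊆ Icc a b) (hh : ∀ x ∈ Icc a b, HasDerivAt h (h' x) x)
    (hint : IntegrableOn h' (Icc a b)) :
    ∫ x in s, h' x = h (sSup s) - h (sInf s) := by
  have hb : BddBelow s := bddBelow_Icc.mono hsub
  have ha : BddAbove s := bddAbove_Icc.mono hsub
  have hle : sInf s ≤ sSup s := csInf_le_csSup hne hb ha
  have hIcc := Icc_csInf_csSup_subset_Icc hne hsub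
  rw [setIntegral_congr_set (hs.ae_eq_Ioc_csInf_csSup hne hb ha),
    ← intervalIntegral.integral_of_le hle]
  refine intervalIntegral.integral_eq_sub_of_hasDerivAt (fun x hx => hh x (hIcc ?_)) ?_
  · rwa [uIcc_of_le hle] at hx
  · exact (intervalIntegrable_iff_integrableOn_Icc_of_le hle).2 (hint.mono_set hIcc)

theorem Set.OrdConnected.norm_integral_deriv_le {C : ℝ} (hs : s.OrdConnected) (hab : a ≤ b)
    (hsub : s ⊆ Icc a b) (hh : ∀ x ∈ Icc a b, HasDerivAt h (h' x) x)
    (hint : IntegrableOn h' (Icc a b)) (hC : ∀ x ∈ Icc a b, ‖h x‖ ≤ C) :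
    ‖∫ x in s, h' x‖ ≤ 2 * C := by
  rcases s.eq_empty_or_nonempty with rfl | hne
  · simpa using (norm_nonneg _).trans (hC a (left_mem_Icc.2 hab))
  have hb : BddBelow s := bddBelow_Icc.mono hsub
  have ha : BddAbove s := bddAbove_Icc.mono hsub
  have hle : sInf s ≤ sSup s := csInf_le_csSup hne hb ha
  have hIcc := Icc_csInf_csSup_subset_Icc hne hsub
  rw [hs.integral_eq_sub_of_hasDerivAt hne hsub hh hint, two_mul]
  exact (norm_sub_le _ _).trans
    (add_le_add (hC _ (hIcc (right_mem_Icc.2 hle))) (hC _ (hIcc (left_mem_Icc.2 hle))))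

theorem norm_intervalIntegral_smul_deriv_le {g : ℝ → ℝ} {C M : ℝ} (hab : a ≤ b)
    (hg : MonotoneOn g (Icc a b) ∨ AntitoneOn g (Icc a b)) (hg0 : ∀ x ∈ Icc a b, 0 ≤ g x)
    (hgM : ∀ x ∈ Icc a b, g x ≤ M) (hh : ∀ x ∈ Icc a b, HasDerivAt h (h' x) x)
    (hint : IntegrableOn h' (Icc a b)) (hC : ∀ x ∈ Icc a b, ‖h x‖ ≤ C) :
    ‖∫ x in a..b, g x • h' x‖ ≤ 2 * C * M := by
  set S : ℝ → Set ℝ := fun t => {x ∈ Icc a b | t < g x}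
  set Φ : ℝ → ℝ → E := fun x t => (S t).indicator h' x
  have hS : ∀ t, (S t).OrdConnected := ordConnected_Icc.sep_lt_of_monotoneOn_or_antitoneOn hg
  have hM : 0 ≤ M := (hg0 a (left_mem_Icc.2 hab)).trans (hgM a (left_mem_Icc.2 hab))
  -- layer cake: `g x = ∫ t in (0, M), 1_{t < g x}`
  have hΦx : ∀ x ∈ Icc a b, ∫ t in Ioo 0 M, Φ x t = g x • h' x := by
    intro x hx
    have hΦ : (fun t => Φ x t) = (Iio (g x)).indicator fun _ => h' x := by
      ext t
      simp [Φ, S, indicator_apply, hx.1, hx.2]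
    rw [hΦ, integral_indicator_const _ measurableSet_Iio,
      measureReal_restrict_apply measurableSet_Iio, Iio_inter_Ioo, min_eq_left (hgM x hx),
      Real.volume_real_Ioo_of_le (hg0 x hx), sub_zero]
  have hΦt : ∀ t, ‖∫ x in Icc a b, Φ x t‖ ≤ 2 * C := by
    intro t
    rw [setIntegral_indicator (hS t).measurableSet, inter_eq_right.2 (sep_subset _ _)]
    exact (hS t).norm_integral_deriv_le hab (sep_subset _ _) hh hint hC
  have hΦint : Integrable (Function.uncurry Φ)
      ((volume.restrict (Icc a b)).prod (volume.restrict (Ioo 0 M))) := by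
    have hgm : AEMeasurable g (volume.restrict (Icc a b)) :=
      hg.elim (aemeasurable_restrict_of_monotoneOn measurableSet_Icc)
        (aemeasurable_restrict_of_antitoneOn measurableSet_Icc)
    refine (hint.comp_fst _).indicator₀ (s := {p : ℝ × ℝ | p.1 ∈ Icc a b ∧ p.2 < g p.1}) ?_
    exact (measurableSet_Icc.preimage measurable_fst).nullMeasurableSet.inter
      (nullMeasurableSet_lt measurable_snd.aemeasurable hgm.comp_fst)
  calc ‖∫ x in a..b, g x • h' x‖ = ‖∫ x in Icc a b, ∫ t in Ioo 0 M, Φ x t‖ := by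
        rw [intervalIntegral.integral_of_le hab, ← integral_Icc_eq_integral_Ioc,
          setIntegral_congr_fun measurableSet_Icc hΦx]
    _ = ‖∫ t in Ioo 0 M, ∫ x in Icc a b, Φ x t‖ := by rw [integral_integral_swap hΦint]
    _ ≤ 2 * C * volume.real (Ioo 0 M) :=
        norm_setIntegral_le_of_norm_le_const measure_Ioo_lt_top fun t _ => hΦt t
    _ = 2 * C * M := by rw [Real.volume_real_Ioo_of_le hM, sub_zero]

end

theorem norm_intervalIntegral_cexp_I_mul_le_of_le_deriv {a b lam : ℝ} {F F' : ℝ → ℝ}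
    (hab : a ≤ b) (hlam : 0 < lam) (hF : ∀ x ∈ Icc a b, HasDerivAt F (F' x) x)
    (hmono : MonotoneOn F' (Icc a b) ∨ AntitoneOn F' (Icc a b))
    (hlow : ∀ x ∈ Icc a b, lam ≤ F' x) :
    ‖∫ x in a..b, cexp (I * F x)‖ ≤ 2 / lam := by
  have hpos : ∀ x ∈ Icc a b, 0 < F' x := fun x hx => hlam.trans_le (hlow x hx)
  have hderiv : ∀ x ∈ Icc a b,
      HasDerivAt (fun y => -I * cexp (I * F y)) (F' x • cexp (I * F x)) x := by
    intro x hx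
    refine ((((hF x hx).ofReal_comp.const_mul I).cexp).const_mul (-I)).congr_deriv ?_
    rw [real_smul]
    linear_combination (-(F' x : ℂ) * cexp (I * F x)) * I_sq
  have hint : IntegrableOn (fun x => F' x • cexp (I * F x)) (Icc a b) := by
    have hFc : ContinuousOn F (Icc a b) := fun x hx => (hF x hx).continuousAt.continuousWithinAt
    refine IntegrableOn.smul_continuousOn ?_ (by fun_prop) isCompact_Icc
    exact hmono.elim (·.integrableOn_isCompact isCompact_Icc)
      (·.integrableOn_isCompact isCompact_Icc)
  have key := norm_intervalIntegral_smul_deriv_le (g := fun x => (F' x)⁻¹) (C := 1) (M := lam⁻¹)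
    hab
    (hmono.symm.imp (antitoneOn_inv_pos.comp · hpos) (antitoneOn_inv_pos.comp_MonotoneOn · hpos))
    (fun x hx => inv_nonneg.2 (hpos x hx).le) (fun x hx => inv_anti₀ hlam (hlow x hx)) hderiv hint
    (fun x _ => by simp [norm_exp_I_mul_ofReal])
  have hcancel : EqOn (fun x => (F' x)⁻¹ • F' x • cexp (I * F x)) (fun x => cexp (I * F x))
      (uIcc a b) := fun x hx => inv_smul_smul₀ (hpos x (uIcc_of_le hab ▸ hx)).ne' _
  rwa [intervalIntegral.integral_congr hcancel, mul_one, ← div_eq_mul_inv] at key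

theorem norm_intervalIntegral_cexp_I_mul_neg (a b : ℝ) (F : ℝ → ℝ) :
    ‖∫ x in a..b, cexp (I * ↑(-F x))‖ = ‖∫ x in a..b, cexp (I * F x)‖ := by
  have hconj : ∀ x, cexp (I * ↑(-F x)) = conj (cexp (I * F x)) := fun x => by
    rw [← exp_conj, map_mul, conj_I, conj_ofReal, ofReal_neg, neg_mul_comm]
  simp_rw [hconj, intervalIntegral.intervalIntegral_conj, RCLike.norm_conj]

theorem first_derivative_test (a b lam : ℝ) (hab : a ≤ b) (hlam : 0 < lam)
    (F F' : ℝ → ℝ)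
    (hF : ∀ x ∈ Set.Icc a b, HasDerivAt F (F' x) x)
    (hmono : MonotoneOn F' (Set.Icc a b) ∨ AntitoneOn F' (Set.Icc a b))
    (hlow : ∀ x ∈ Set.Icc a b, lam ≤ |F' x|) :
    ‖∫ x in a..b, Complex.exp (Complex.I * F x)‖ ≤ 4 / lam := by
  have hne : ∀ x ∈ Icc a b, F' x ≠ 0 := fun x hx h0 => by
    simpa [h0] using hlam.trans_le (hlow x hx)
  have h24 : 2 / lam ≤ 4 / lam := by gcongr; norm_num
  rcases hasDerivWithinAt_forall_lt_or_forall_gt_of_forall_ne (convex_Icc a b)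
    (fun x hx => (hF x hx).hasDerivWithinAt) hne with hneg | hpos
  · rw [← norm_intervalIntegral_cexp_I_mul_neg]
    refine (norm_intervalIntegral_cexp_I_mul_le_of_le_deriv hab hlam (fun x hx => (hF x hx).neg)
      (hmono.symm.imp AntitoneOn.neg MonotoneOn.neg) fun x hx => ?_).trans h24
    simpa [abs_of_neg (hneg x hx)] using hlow x hx
  · refine (norm_intervalIntegral_cexp_I_mul_le_of_le_deriv hab hlam hF hmono
      fun x hx => ?_).trans h24
    simpa [abs_of_pos (hpos x hx)] using hlow x hx
end

section
/- Mean value theorem for Dirichlet polynomials (upper bound form): for complex numbers a_N, …, a_{2N} and T ≥ 1, ∫_0^T |Σ_{N < n ≤ 2N} a_n n^{−it}|² dt ≤ (T + C·N) Σ_{N < n ≤ 2N} |a_n|², for some absolute constant C (e.g. via |∫_0^T (m/n)^{it} dt| ≤ min(T, 2/|log(m/n)|) and |log(m/n)| ≫ |m−n|/N). -/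
open Complex Finset MeasureTheory intervalIntegral Real ComplexConjugate

/-!
Averaging the shifted integrals `∫_{-N}^{T+N} |F(x+u)|² dx` over `u ∈ [-N, N]` dominates
`2N ∫_0^T |F|²`, and it replaces the kernel `∫ e^{iθx} dx` of the resulting quadratic form in the
`a_n` by a product of two such integrals, which is `O(1/θ²)` rather than `O(1/|θ|)`. Since
`|log m - log n| ≥ |m - n| / 2N` on `(N, 2N]`, the off-diagonal kernel is at most `16N²/(m - n)²`,
whose row sums are `O(N²)`, and Schur's test bounds the form by `2N (T + O(N)) ∑ |a_n|²` without
the logarithmic loss of the direct estimate.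
-/

theorem Real.abs_sub_le_mul_abs_log_sub_log {x y M : ℝ} (hx : 0 < x) (hy : 0 < y)
    (hxM : x ≤ M) (hyM : y ≤ M) : |x - y| ≤ M * |Real.log x - Real.log y| := by
  wlog hyx : y ≤ x generalizing x y
  · rw [abs_sub_comm, abs_sub_comm (Real.log x)]
    exact this hy hx hyM hxM (le_of_not_ge hyx)
  have hlog : 1 - (x / y)⁻¹ ≤ Real.log x - Real.log y := by
    rw [← Real.log_div hx.ne' hy.ne']
    exact Real.one_sub_inv_le_log_of_pos (div_pos hx hy)
  calc |x - y| = x * (1 - (x / y)⁻¹) := by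
        rw [abs_of_nonneg (sub_nonneg.2 hyx), inv_div]; field_simp
    _ ≤ M * |Real.log x - Real.log y| := by
        refine mul_le_mul hxM (hlog.trans (le_abs_self _)) ?_ (hx.le.trans hxM)
        rw [inv_div, sub_nonneg]
        exact div_le_one_of_le₀ hyx hx.le

theorem sum_one_div_sub_sq_le (s : Finset ℕ) (m : ℕ) :
    ∑ n ∈ s, 1 / ((m : ℝ) - n) ^ 2 ≤ π ^ 2 / 3 := by
  have hsummable : Summable fun k : ℤ => 1 / (k : ℝ) ^ 2 :=
    Real.summable_one_div_int_pow.2 one_lt_two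
  have htsum : ∑' k : ℤ, 1 / ((m : ℝ) - k) ^ 2 = π ^ 2 / 3 := by
    have h := (Equiv.subLeft (m : ℤ)).tsum_eq (fun k : ℤ => 1 / (k : ℝ) ^ 2)
    rw [tsum_int_eq_zero_add_two_mul_tsum_pnat (fun k => by simp) hsummable] at h
    push_cast at h
    rw [tsum_pnat_eq_tsum_of_eq_zero (f := fun k : ℕ => 1 / (k : ℝ) ^ 2) (by simp),
      hasSum_zeta_two.tsum_eq] at h
    simp only [Equiv.subLeft_apply, Int.cast_sub, Int.cast_natCast] at h
    rw [h]; ring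
  calc ∑ n ∈ s, 1 / ((m : ℝ) - n) ^ 2
      = ∑ k ∈ s.map Nat.castEmbedding, 1 / ((m : ℝ) - (k : ℤ)) ^ 2 := by simp
    _ ≤ ∑' k : ℤ, 1 / ((m : ℝ) - k) ^ 2 := by
        refine Summable.sum_le_tsum _ (fun k _ => by positivity) ?_
        have := (Equiv.subLeft (m : ℤ)).summable_iff.2 hsummable
        simpa [Function.comp_def] using this
    _ = π ^ 2 / 3 := htsum

theorem norm_integral_cexp_mul_I_le {θ : ℝ} (hθ : θ ≠ 0) (a b : ℝ) :
    ‖∫ t in a..b, cexp (θ * t * I)‖ ≤ 2 / |θ| := by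
  have hθI : (θ : ℂ) * I ≠ 0 := mul_ne_zero (ofReal_ne_zero.2 hθ) I_ne_zero
  have hexp : ∀ t : ℝ, ‖cexp ((θ * I) * t)‖ = 1 := fun t => by
    rw [norm_exp]; simp
  simp_rw [mul_right_comm (θ : ℂ) _ I]
  rw [integral_exp_mul_complex hθI, norm_div, norm_mul, norm_I, mul_one, norm_real,
    Real.norm_eq_abs]
  gcongr
  calc _ ≤ ‖cexp ((θ * I) * b)‖ + ‖cexp ((θ * I) * a)‖ := norm_sub_le _ _
    _ = 2 := by rw [hexp, hexp]; norm_num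

theorem sum_sum_mul_mul_le_of_symm {ι : Type*} (s : Finset ι) (x : ι → ℝ) {M : ι → ι → ℝ}
    (hM : ∀ m n, M m n = M n m) (hM0 : ∀ m n, 0 ≤ M m n) {B : ℝ}
    (hB : ∀ m ∈ s, ∑ n ∈ s, M m n ≤ B) :
    ∑ m ∈ s, ∑ n ∈ s, x m * x n * M m n ≤ B * ∑ m ∈ s, x m ^ 2 := by
  have hswap : ∑ m ∈ s, ∑ n ∈ s, x n ^ 2 * M m n = ∑ m ∈ s, ∑ n ∈ s, x m ^ 2 * M m n := by
    rw [sum_comm]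
    exact sum_congr rfl fun m _ => sum_congr rfl fun n _ => by rw [hM]
  have hamgm : ∀ m n, x m * x n * M m n ≤ (x m ^ 2 * M m n + x n ^ 2 * M m n) / 2 :=
    fun m n => by nlinarith [hM0 m n, mul_nonneg (sq_nonneg (x m - x n)) (hM0 m n)]
  calc ∑ m ∈ s, ∑ n ∈ s, x m * x n * M m n
      ≤ ∑ m ∈ s, ∑ n ∈ s, (x m ^ 2 * M m n + x n ^ 2 * M m n) / 2 :=
        sum_le_sum fun m _ => sum_le_sum fun n _ => hamgm m n
    _ = (∑ m ∈ s, ∑ n ∈ s, x m ^ 2 * M m n + ∑ m ∈ s, ∑ n ∈ s, x n ^ 2 * M m n) / 2 := by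
        simp only [add_div, sum_add_distrib, sum_div]
    _ = ∑ m ∈ s, x m ^ 2 * ∑ n ∈ s, M m n := by rw [hswap]; simp_rw [mul_sum]; ring
    _ ≤ ∑ m ∈ s, x m ^ 2 * B := sum_le_sum fun m hm => by gcongr; exact hB m hm
    _ = B * ∑ m ∈ s, x m ^ 2 := by rw [mul_sum]; simp_rw [mul_comm]

theorem norm_sum_sum_mul_conj_mul_le {ι : Type*} (s : Finset ι) (z : ι → ℂ) {K : ι → ι → ℂ}
    {M : ι → ι → ℝ} (hM : ∀ m n, M m n = M n m) (hM0 : ∀ m n, 0 ≤ M m n)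
    (hK : ∀ m ∈ s, ∀ n ∈ s, ‖K m n‖ ≤ M m n) {B : ℝ} (hB : ∀ m ∈ s, ∑ n ∈ s, M m n ≤ B) :
    ‖∑ m ∈ s, ∑ n ∈ s, z m * conj (z n) * K m n‖ ≤ B * ∑ m ∈ s, ‖z m‖ ^ 2 := by
  calc ‖∑ m ∈ s, ∑ n ∈ s, z m * conj (z n) * K m n‖
      ≤ ∑ m ∈ s, ∑ n ∈ s, ‖z m‖ * ‖z n‖ * M m n := by
        refine (norm_sum_le _ _).trans (sum_le_sum fun m hm => ?_)
        refine (norm_sum_le _ _).trans (sum_le_sum fun n hn => ?_)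
        rw [norm_mul, norm_mul, RCLike.norm_conj]
        gcongr
        exact hK m hm n hn
    _ ≤ B * ∑ m ∈ s, ‖z m‖ ^ 2 := sum_sum_mul_mul_le_of_symm s _ hM hM0 hB

theorem mul_integral_le_integral_integral_comp_add {f : ℝ → ℝ} (hf : Continuous f)
    (hf0 : ∀ x, 0 ≤ f x) {T L : ℝ} (hT : 0 ≤ T) (hL : 0 ≤ L) :
    2 * L * ∫ x in (0 : ℝ)..T, f x ≤ ∫ u in -L..L, ∫ x in -L..T + L, f (x + u) := by
  have hshift : ∀ u ∈ Set.Icc (-L) L,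
      ∫ x in (0 : ℝ)..T, f x ≤ ∫ x in -L..T + L, f (x + u) := fun u ⟨hu₁, hu₂⟩ => by
    rw [integral_comp_add_right f u]
    exact integral_mono_interval (by linarith) hT (by linarith)
      (Filter.Eventually.of_forall hf0) (hf.intervalIntegrable _ _)
  calc 2 * L * ∫ x in (0 : ℝ)..T, f x = ∫ _ in -L..L, ∫ x in (0 : ℝ)..T, f x := by
        rw [intervalIntegral.integral_const, smul_eq_mul]; ring
    _ ≤ ∫ u in -L..L, ∫ x in -L..T + L, f (x + u) := by
        refine integral_mono_on (by linarith) intervalIntegrable_const ?_ hshift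
        exact (continuous_parametric_intervalIntegral_of_continuous'
          (by fun_prop) _ _).intervalIntegrable _ _

theorem sq_norm_sum_eq_re_sum_sum {ι : Type*} (s : Finset ι) (w : ι → ℂ) :
    ‖∑ n ∈ s, w n‖ ^ 2 = (∑ m ∈ s, ∑ n ∈ s, w m * conj (w n)).re := by
  rw [← sum_mul_sum, ← map_sum, mul_conj', ← ofReal_pow, ofReal_re]

theorem integral_re_sum_sum_mul {ι : Type*} (s : Finset ι) (c : ι → ι → ℂ)
    {g : ι → ι → ℝ → ℂ} (hg : ∀ m n, Continuous (g m n)) (a b : ℝ) :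
    ∫ t in a..b, (∑ m ∈ s, ∑ n ∈ s, c m n * g m n t).re
      = (∑ m ∈ s, ∑ n ∈ s, c m n * ∫ t in a..b, g m n t).re := by
  have hint : ∀ m n, IntervalIntegrable (fun t => c m n * g m n t) volume a b :=
    fun m n => (continuous_const.mul (hg m n)).intervalIntegrable a b
  have hrow : ∀ m, Continuous fun t => ∑ n ∈ s, c m n * g m n t :=
    fun m => continuous_finsetSum _ fun n _ => continuous_const.mul (hg m n)
  calc _ = (∫ t in a..b, ∑ m ∈ s, ∑ n ∈ s, c m n * g m n t).re :=
        intervalIntegral_re ((continuous_finsetSum _ fun m _ => hrow m).intervalIntegrable a b)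
    _ = _ := by
        rw [integral_finsetSum fun m _ => (hrow m).intervalIntegrable a b]
        simp_rw [integral_finsetSum fun n _ => hint _ n, intervalIntegral.integral_const_mul]

theorem integral_integral_sq_norm_sum_cexp {ι : Type*} (s : Finset ι) (z : ι → ℂ) (ω : ι → ℝ)
    (a b c d : ℝ) :
    ∫ u in c..d, ∫ x in a..b, ‖∑ n ∈ s, z n * cexp (ω n * (x + u : ℝ) * I)‖ ^ 2
      = (∑ m ∈ s, ∑ n ∈ s, z m * conj (z n) *
          ((∫ x in a..b, cexp ((ω m - ω n : ℝ) * x * I)) *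
            ∫ u in c..d, cexp ((ω m - ω n : ℝ) * u * I))).re := by
  set e : ι → ι → ℝ → ℂ := fun m n t => cexp ((ω m - ω n : ℝ) * t * I)
  have he : ∀ m n, Continuous (e m n) := fun m n => by fun_prop
  have hexpand : ∀ x u : ℝ, ‖∑ n ∈ s, z n * cexp (ω n * (x + u : ℝ) * I)‖ ^ 2
      = (∑ m ∈ s, ∑ n ∈ s, z m * conj (z n) * e m n u * e m n x).re := fun x u => by
    rw [sq_norm_sum_eq_re_sum_sum]
    congr 1
    refine sum_congr rfl fun m _ => sum_congr rfl fun n _ => ?_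
    rw [map_mul, mul_mul_mul_comm, ← Complex.exp_conj, ← Complex.exp_add, mul_assoc _ (e m n u),
      ← Complex.exp_add]
    simp only [map_mul, conj_ofReal, conj_I]
    push_cast
    ring_nf
  simp_rw [hexpand, integral_re_sum_sum_mul s _ he]
  simp_rw [mul_right_comm _ (e _ _ _), integral_re_sum_sum_mul s _ he]
  simp only [e, mul_assoc]

theorem natCast_cpow_neg_I_mul {n : ℕ} (hn : n ≠ 0) (t : ℝ) :
    (n : ℂ) ^ (-(I * t)) = cexp ((-Real.log n : ℝ) * t * I) := by
  rw [cpow_def_of_ne_zero (Nat.cast_ne_zero.2 hn), ← natCast_log]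
  push_cast
  ring_nf

/-- Bounds the kernel at `θ = log n - log m`; on the diagonal the second summand is
`16 N² / 0 = 0`. -/
noncomputable def kernelMajorant (N : ℕ) (T : ℝ) (m n : ℕ) : ℝ :=
  (if m = n then (T + 2 * N) * (2 * N) else 0) + 16 * N ^ 2 / ((m : ℝ) - n) ^ 2

theorem kernelMajorant_comm (N : ℕ) (T : ℝ) (m n : ℕ) :
    kernelMajorant N T m n = kernelMajorant N T n m := by
  simp only [kernelMajorant, eq_comm (a := m), ← neg_sub (n : ℝ), neg_sq]

theorem kernelMajorant_nonneg (N : ℕ) {T : ℝ} (hT : 0 ≤ T) (m n : ℕ) :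
    0 ≤ kernelMajorant N T m n := by
  unfold kernelMajorant
  split_ifs <;> positivity

theorem sum_kernelMajorant_le (N : ℕ) (T : ℝ) {m : ℕ} (hm : m ∈ Ioc N (2 * N)) :
    ∑ n ∈ Ioc N (2 * N), kernelMajorant N T m n
      ≤ (T + 2 * N) * (2 * N) + 16 * N ^ 2 * (π ^ 2 / 3) := by
  simp only [kernelMajorant, sum_add_distrib, sum_ite_eq, if_pos hm]
  simp_rw [div_eq_mul_one_div (16 * (N : ℝ) ^ 2), ← mul_sum]
  gcongr
  exact sum_one_div_sub_sq_le _ m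

theorem norm_integral_mul_integral_cexp_log_le {N m n : ℕ} (hm : m ∈ Ioc N (2 * N))
    (hn : n ∈ Ioc N (2 * N)) {T : ℝ} (hT : 0 ≤ T) :
    ‖(∫ x in -(N : ℝ)..T + N, cexp ((-Real.log m - -Real.log n : ℝ) * x * I)) *
        ∫ u in -(N : ℝ)..N, cexp ((-Real.log m - -Real.log n : ℝ) * u * I)‖
      ≤ kernelMajorant N T m n := by
  rw [mem_Ioc] at hm hn
  rcases eq_or_ne m n with rfl | hmn
  · have hN : (0 : ℝ) ≤ N := N.cast_nonneg
    simp only [sub_self, ofReal_zero, zero_mul, Complex.exp_zero, intervalIntegral.integral_const,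
      norm_mul, norm_smul, norm_one, mul_one, Real.norm_eq_abs, kernelMajorant, if_true]
    rw [abs_of_nonneg (by linarith), abs_of_nonneg (by linarith)]
    norm_num
    linarith
  · set θ : ℝ := -Real.log m - -Real.log n
    have hgap : |(m : ℝ) - n| ≤ 2 * N * |θ| := by
      rw [show θ = Real.log n - Real.log m by ring, abs_sub_comm (m : ℝ)]
      exact Real.abs_sub_le_mul_abs_log_sub_log (by norm_cast; omega) (by norm_cast; omega)
        (by norm_cast; omega) (by norm_cast; omega)
    have hmn' : 0 < |(m : ℝ) - n| := abs_pos.2 (sub_ne_zero.2 (Nat.cast_injective.ne hmn))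
    have hθ : 0 < |θ| := abs_pos.2 fun hθ0 => by
      rw [hθ0, abs_zero, mul_zero] at hgap
      linarith
    have h2θ : 2 / |θ| ≤ 4 * N / |(m : ℝ) - n| := by
      rw [div_le_div_iff₀ hθ hmn']; linarith
    calc _ ≤ (2 / |θ|) * (2 / |θ|) := by
          rw [norm_mul]
          exact mul_le_mul (norm_integral_cexp_mul_I_le (abs_pos.1 hθ) _ _)
            (norm_integral_cexp_mul_I_le (abs_pos.1 hθ) _ _) (norm_nonneg _) (by positivity)
      _ ≤ (4 * N / |(m : ℝ) - n|) * (4 * N / |(m : ℝ) - n|) := by gcongr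
      _ = kernelMajorant N T m n := by
          rw [kernelMajorant, if_neg hmn, zero_add, div_mul_div_comm, abs_mul_abs_self]; ring

theorem mean_value_dirichlet_polynomials :
    ∃ C : ℝ, 0 < C ∧ ∀ (N : ℕ) (a : ℕ → ℂ) (T : ℝ), 1 ≤ T →
      ∫ t in (0:ℝ)..T,
          ‖∑ n ∈ Finset.Ioc N (2 * N), a n * (n : ℂ) ^ (-(Complex.I * t))‖ ^ 2
        ≤ (T + C * N) * ∑ n ∈ Finset.Ioc N (2 * N), ‖a n‖ ^ 2 := by
  refine ⟨2 + 8 * π ^ 2 / 3, by positivity, fun N a T hT => ?_⟩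
  rcases N.eq_zero_or_pos with rfl | hN
  · simp
  have hT₀ : 0 ≤ T := zero_le_one.trans hT
  set s := Ioc N (2 * N)
  set ω : ℕ → ℝ := fun n => -Real.log n
  set F : ℝ → ℝ := fun t => ‖∑ n ∈ s, a n * cexp (ω n * t * I)‖ ^ 2
  have hpoly : ∀ t : ℝ, ‖∑ n ∈ s, a n * (n : ℂ) ^ (-(I * t))‖ ^ 2 = F t := fun t => by
    refine congrArg (‖·‖ ^ 2) (sum_congr rfl fun n hn => ?_)
    rw [natCast_cpow_neg_I_mul (by simp only [s, mem_Ioc] at hn; omega)]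
  have hsmooth := mul_integral_le_integral_integral_comp_add (f := F) (by fun_prop)
    (fun _ => by positivity) hT₀ (Nat.cast_nonneg N)
  rw [integral_integral_sq_norm_sum_cexp] at hsmooth
  have hkernel := norm_sum_sum_mul_conj_mul_le s a (kernelMajorant_comm N T)
    (kernelMajorant_nonneg N hT₀) (fun m hm n hn => norm_integral_mul_integral_cexp_log_le hm hn hT₀)
    (fun m hm => sum_kernelMajorant_le N T hm)
  have key := hsmooth.trans ((re_le_norm _).trans hkernel)
  rw [show (T + 2 * N) * (2 * N) + 16 * (N : ℝ) ^ 2 * (π ^ 2 / 3)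
      = 2 * N * (T + (2 + 8 * π ^ 2 / 3) * N) by ring] at key
  simp_rw [hpoly]
  refine le_of_mul_le_mul_left ?_ (by positivity : (0 : ℝ) < 2 * N)
  simpa only [mul_assoc] using key
end

section
/- For any real T ≥ 1 and integer K ≥ 1, the number of quadruples (m,n,k,ℓ) with K < m,n,k,ℓ ≤ 2K and √m + √n = √k + √ℓ is at most C_ε · K^{2+ε} for every ε > 0. -/
/-!
Squaring `√m + √n = √k + √ℓ` gives `m + n + 2√(mn) = k + ℓ + 2√(kℓ)`. If `mn = kℓ` then also
`m + n = k + ℓ`, so `{k, ℓ} = {m, n}`; otherwise `√(mn) - √(kℓ)` and `mn - kℓ` are nonzero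
rationals, hence so is `√(mn)`, and `mn` is a square. As `ℓ` is determined by `m, n, k`, there
are at most `2K² + K · P` quadruples, where `P` counts the pairs with `mn` a square. Such a pair
is `(s a², s b²)`, so `P ≤ ∑_{s ≤ 2K} 2K / s ≤ 2K (1 + log 2K)`.
-/

open Finset Real

theorem Nat.exists_eq_mul_sq_of_isSquare_mul {m n : ℕ} (h : IsSquare (m * n)) :
    ∃ s a b : ℕ, m = s * a ^ 2 ∧ n = s * b ^ 2 := by
  obtain ⟨m', n', hcop, hm, hn⟩ := Nat.exists_coprime m n
  set g := m.gcd n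
  rcases Nat.eq_zero_or_pos g with hg | hg
  · exact ⟨0, 0, 0, by simp [hm, hg], by simp [hn, hg]⟩
  obtain ⟨c, hc⟩ := h
  rw [hm, hn] at hc
  have hgc : g ∣ c := (Nat.pow_dvd_pow_iff two_ne_zero).mp ⟨m' * n', by linarith⟩
  obtain ⟨c', rfl⟩ := hgc
  have hmn' : m' * n' = c' ^ 2 :=
    Nat.eq_of_mul_eq_mul_left (pow_pos hg 2) (by linarith)
  obtain ⟨a, ha⟩ := exists_eq_pow_of_mul_eq_pow (Nat.isUnit_iff.mpr hcop) hmn'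
  obtain ⟨b, hb⟩ := exists_eq_pow_of_mul_eq_pow (Nat.isUnit_iff.mpr hcop.symm)
    ((mul_comm n' m').trans hmn')
  exact ⟨g, a, b, by rw [hm, ha, mul_comm], by rw [hn, hb, mul_comm]⟩

theorem eq_ratCast_of_sub_eq_of_sq_sub_sq_eq {x y : ℝ} {p q : ℚ} (hp : p ≠ 0)
    (h₁ : x - y = p) (h₂ : x ^ 2 - y ^ 2 = q) : x = ((p + q / p) / 2 : ℚ) := by
  have hsum : x + y = q / p := by
    rw [eq_div_iff (by exact_mod_cast hp), ← h₂, ← h₁]; ring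
  push_cast
  linear_combination (h₁ + hsum) / 2

theorem sq_sqrt_add_sqrt {x y : ℝ} (hx : 0 ≤ x) (hy : 0 ≤ y) :
    (√x + √y) ^ 2 = x + y + 2 * √(x * y) := by
  rw [add_sq, sq_sqrt hx, sq_sqrt hy, sqrt_mul hx]; ring

theorem eq_or_eq_or_isSquare_mul_of_sqrt_add_sqrt_eq {m n k l : ℕ}
    (h : √(m : ℝ) + √(n : ℝ) = √(k : ℝ) + √(l : ℝ)) : k = m ∨ k = n ∨ IsSquare (m * n) := by
  have hsq : (m : ℝ) + n + 2 * √(m * n) = k + l + 2 * √(k * l) := by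
    rw [← sq_sqrt_add_sqrt, ← sq_sqrt_add_sqrt, h] <;> positivity
  by_cases hprod : (m : ℝ) * n = k * l
  · have hsum : (m : ℝ) + n = k + l := by rw [hprod] at hsq; linarith
    have hroot : ((k : ℝ) - m) * (k - n) = 0 := by linear_combination hprod - k * hsum
    rcases mul_eq_zero.mp hroot with hkm | hkn
    · exact Or.inl (by exact_mod_cast sub_eq_zero.mp hkm)
    · exact Or.inr (Or.inl (by exact_mod_cast sub_eq_zero.mp hkn))
  · right; right
    set p : ℚ := (k + l - m - n) / 2
    have hdiff : √((m : ℝ) * n) - √((k : ℝ) * l) = p := by push_cast [p]; linarith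
    have hp : p ≠ 0 := by
      rintro hp0
      rw [hp0, Rat.cast_zero, sub_eq_zero, sqrt_inj (by positivity) (by positivity)] at hdiff
      exact hprod hdiff
    have hrat := eq_ratCast_of_sub_eq_of_sq_sub_sq_eq (q := m * n - k * l) hp hdiff
      (by push_cast; rw [sq_sqrt (by positivity), sq_sqrt (by positivity)])
    rw [← not_not (a := IsSquare _), ← irrational_sqrt_natCast_iff, Nat.cast_mul, hrat]
    exact Rat.not_irrational _

noncomputable def sqrtSumQuadruples (A : Finset ℕ) : Finset (ℕ × ℕ × ℕ × ℕ) :=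
  (A ×ˢ A ×ˢ A ×ˢ A).filter fun q => √(q.1 : ℝ) + √(q.2.1 : ℝ) = √(q.2.2.1 : ℝ) + √(q.2.2.2 : ℝ)

def squareProductPairs (A : Finset ℕ) : Finset (ℕ × ℕ) :=
  (A ×ˢ A).filter fun p => IsSquare (p.1 * p.2)

theorem squareProductPairs_mono {A B : Finset ℕ} (h : A ⊆ B) :
    squareProductPairs A ⊆ squareProductPairs B :=
  filter_subset_filter _ (product_subset_product h h)

theorem card_sqrtSumQuadruples_le (A : Finset ℕ) :
    #(sqrtSumQuadruples A) ≤ 2 * #A ^ 2 + #(squareProductPairs A) * #A := by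
  let f : ℕ × ℕ × ℕ × ℕ → (ℕ × ℕ) × ℕ := fun q => ((q.1, q.2.1), q.2.2.1)
  let T := (A ×ˢ A).image (fun p => (p, p.1)) ∪ (A ×ˢ A).image (fun p => (p, p.2)) ∪
    squareProductPairs A ×ˢ A
  have hmaps : Set.MapsTo f (sqrtSumQuadruples A) T := by
    rintro ⟨m, n, k, l⟩ hq
    simp only [sqrtSumQuadruples, coe_filter, mem_product, Set.mem_ofPred_eq] at hq
    obtain ⟨⟨hm, hn, hk, -⟩, h⟩ := hq
    rcases eq_or_eq_or_isSquare_mul_of_sqrt_add_sqrt_eq h with rfl | rfl | hsq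
    · simp [T, f, hm, hn]
    · simp [T, f, hm, hn]
    · simp [T, f, squareProductPairs, hm, hn, hk, hsq]
  have hinj : Set.InjOn f (sqrtSumQuadruples A) := by
    rintro ⟨m, n, k, l⟩ hq ⟨m', n', k', l'⟩ hq' hf
    simp only [f, Prod.mk.injEq] at hf
    obtain ⟨⟨rfl, rfl⟩, rfl⟩ := hf
    simp only [sqrtSumQuadruples, coe_filter, Set.mem_ofPred_eq] at hq hq'
    have : √(l : ℝ) = √(l' : ℝ) := by linarith [hq.2, hq'.2]
    rw [sqrt_inj (Nat.cast_nonneg _) (Nat.cast_nonneg _), Nat.cast_inj] at this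
    rw [this]
  calc #(sqrtSumQuadruples A) ≤ #T := card_le_card_of_injOn f hmaps hinj
    _ ≤ #(A ×ˢ A) + #(A ×ˢ A) + #(squareProductPairs A ×ˢ A) :=
      (card_union_le _ _).trans (add_le_add ((card_union_le _ _).trans
        (add_le_add card_image_le card_image_le)) le_rfl)
    _ = 2 * #A ^ 2 + #(squareProductPairs A) * #A := by rw [card_product, card_product]; ring

theorem squareProductPairs_Icc_subset (N : ℕ) :
    squareProductPairs (Icc 1 N) ⊆ (Icc 1 N).biUnion fun s =>
      (Icc 1 (Nat.sqrt (N / s)) ×ˢ Icc 1 (Nat.sqrt (N / s))).image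
        fun ab => (s * ab.1 ^ 2, s * ab.2 ^ 2) := by
  rintro ⟨m, n⟩ hp
  simp only [squareProductPairs, mem_filter, mem_product, mem_Icc] at hp
  obtain ⟨⟨⟨hm1, hmN⟩, hn1, hnN⟩, hsq⟩ := hp
  obtain ⟨s, a, b, rfl, rfl⟩ := Nat.exists_eq_mul_sq_of_isSquare_mul hsq
  have hs : 0 < s := Nat.pos_of_mul_pos_right hm1
  have ha : 0 < a := pos_of_ne_zero (by rintro rfl; simp at hm1)
  have hb : 0 < b := pos_of_ne_zero (by rintro rfl; simp at hn1)
  have hle {c : ℕ} (hc : s * c ^ 2 ≤ N) : c ≤ Nat.sqrt (N / s) := by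
    rw [Nat.le_sqrt', Nat.le_div_iff_mul_le hs, mul_comm]; exact hc
  simp only [mem_biUnion, mem_image, mem_product, mem_Icc, Prod.mk.injEq]
  exact ⟨s, ⟨hs, le_trans (Nat.le_mul_of_pos_right s (by positivity)) hmN⟩,
    (a, b), ⟨⟨ha, hle hmN⟩, hb, hle hnN⟩, rfl, rfl⟩

theorem sum_Icc_div_le_mul_one_add_log (N : ℕ) :
    ∑ s ∈ Icc 1 N, ((N / s : ℕ) : ℝ) ≤ N * (1 + log N) := by
  calc ∑ s ∈ Icc 1 N, ((N / s : ℕ) : ℝ) ≤ ∑ s ∈ Icc 1 N, (N : ℝ) * (s : ℝ)⁻¹ :=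
        sum_le_sum fun s _ => Nat.cast_div_le.trans_eq (div_eq_mul_inv _ _)
    _ = N * harmonic N := by
        rw [← mul_sum, harmonic_eq_sum_Icc]; push_cast; rfl
    _ ≤ N * (1 + log N) := by gcongr; exact harmonic_le_one_add_log N

theorem card_squareProductPairs_Icc_le (N : ℕ) :
    (#(squareProductPairs (Icc 1 N)) : ℝ) ≤ N * (1 + log N) := by
  have hcard : #(squareProductPairs (Icc 1 N)) ≤ ∑ s ∈ Icc 1 N, N / s := by
    refine (card_le_card (squareProductPairs_Icc_subset N)).trans
      (card_biUnion_le.trans (sum_le_sum fun s _ => card_image_le.trans ?_))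
    rw [card_product, Nat.card_Icc, Nat.add_sub_cancel]
    exact Nat.sqrt_le _
  calc (#(squareProductPairs (Icc 1 N)) : ℝ) ≤ ∑ s ∈ Icc 1 N, ((N / s : ℕ) : ℝ) := by
        exact_mod_cast hcard
    _ ≤ N * (1 + log N) := sum_Icc_div_le_mul_one_add_log N

theorem two_add_log_two_mul_le {ε x : ℝ} (hε : 0 < ε) (hx : 1 ≤ x) :
    2 + log (2 * x) ≤ (3 + 1 / ε) * x ^ ε := by
  have hxε : 1 ≤ x ^ ε := one_le_rpow hx hε.le
  have hlog2 : log 2 ≤ 1 := (log_two_lt_d9.trans (by norm_num)).le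
  have hlogx : log x ≤ x ^ ε / ε := log_le_rpow_div (by linarith) hε
  rw [log_mul two_ne_zero (by positivity)]
  calc 2 + (log 2 + log x) ≤ 3 * x ^ ε + x ^ ε / ε := by linarith
    _ = (3 + 1 / ε) * x ^ ε := by ring

theorem count_sqrt_quadruples (ε : ℝ) (hε : 0 < ε) :
    ∃ C : ℝ, 0 < C ∧ ∀ K : ℕ, 1 ≤ K →
      ((((Finset.Ioc K (2 * K)) ×ˢ (Finset.Ioc K (2 * K)) ×ˢ
          (Finset.Ioc K (2 * K)) ×ˢ (Finset.Ioc K (2 * K))).filter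
            (fun q : ℕ × ℕ × ℕ × ℕ =>
              Real.sqrt q.1 + Real.sqrt q.2.1 = Real.sqrt q.2.2.1 + Real.sqrt q.2.2.2)).card : ℝ)
        ≤ C * (K : ℝ) ^ ((2 : ℝ) + ε) := by
  refine ⟨2 * (3 + 1 / ε), by positivity, fun K hK => ?_⟩
  change (#(sqrtSumQuadruples (Ioc K (2 * K))) : ℝ) ≤ _
  have hK : (1 : ℝ) ≤ K := by exact_mod_cast hK
  have hpairs : (#(squareProductPairs (Ioc K (2 * K))) : ℝ) ≤ 2 * K * (1 + log (2 * K)) := by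
    have := card_le_card (squareProductPairs_mono (A := Ioc K (2 * K)) (B := Icc 1 (2 * K))
      (Ioc_subset_Icc_self.trans (Icc_subset_Icc_left (by omega))))
    exact_mod_cast (Nat.cast_le.mpr this).trans (card_squareProductPairs_Icc_le (2 * K))
  have hquad := card_sqrtSumQuadruples_le (Ioc K (2 * K))
  rw [Nat.card_Ioc, show 2 * K - K = K by omega] at hquad
  calc (#(sqrtSumQuadruples (Ioc K (2 * K))) : ℝ)
      ≤ 2 * K ^ 2 + #(squareProductPairs (Ioc K (2 * K))) * K := by exact_mod_cast hquad
    _ ≤ 2 * K ^ 2 + 2 * K * (1 + log (2 * K)) * K := by gcongr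
    _ = 2 * K ^ 2 * (2 + log (2 * K)) := by ring
    _ ≤ 2 * K ^ 2 * ((3 + 1 / ε) * K ^ ε) := by gcongr; exact two_add_log_two_mul_le hε hK
    _ = 2 * (3 + 1 / ε) * K ^ (2 + ε) := by
        rw [rpow_add (by linarith), rpow_two]; ring
end

section
/- For positive reals k ≤ K and t ≥ T with K ≤ T, the function f(t,k) = 2t·arsinh(√(πk/(2t))) + √(2πkt + π²k²) − π/4 satisfies f(t,k) = −π/4 + 2√(2πkt) + (1/6)√(2π³)·k^{3/2}t^{−1/2} + O(k^{5/2}t^{−3/2}), i.e. |f(t,k) + π/4 − 2√(2πkt) − (√(2π³)/6)k^{3/2}t^{−1/2}| ≤ C·k^{5/2}·t^{−3/2} for an absolute constant C, uniformly for 0 < k ≤ t. -/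
/-!
With `x = √(πk/(2t))` one has `√(2πkt) = 2tx` and `√(2πkt + π²k²) = 2tx√(1 + x²)`, and the
cubic term is `(2/3)tx³`, so the error term is exactly `2t·g(x)` with
`g(x) = arsinh x + x√(1 + x²) - 2x - x³/3`. Since `arsinh x + x√(1 + x²)` has derivative
`2√(1 + x²)`, `g'(x) = -(√(1 + x²) - 1)²`, which is at most `x⁴/4` in size; so `|g(x)| ≤ |x|⁵/4`
and the error is at most `tx⁵/2 = (π/2)^{5/2}/2 · k^{5/2} t^{-3/2}`.
-/

open Real

lemma hasDerivAt_arsinh_add_mul_sqrt_one_add_sq (y : ℝ) :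
    HasDerivAt (fun y => arsinh y + y * √(1 + y ^ 2)) (2 * √(1 + y ^ 2)) y := by
  have hpos : 0 < 1 + y ^ 2 := by positivity
  have hsqrt : HasDerivAt (fun y => √(1 + y ^ 2)) (2 * y / (2 * √(1 + y ^ 2))) y := by
    simpa using ((hasDerivAt_pow 2 y).const_add 1).sqrt hpos.ne'
  refine ((hasDerivAt_arsinh y).add ((hasDerivAt_id' y).mul hsqrt)).congr_deriv ?_
  field_simp
  rw [sq_sqrt hpos.le]
  ring

lemma sq_sqrt_one_add_sq_sub_one_le (y : ℝ) : (√(1 + y ^ 2) - 1) ^ 2 ≤ y ^ 4 / 4 := by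
  have hlower : 1 ≤ √(1 + y ^ 2) := one_le_sqrt.2 (by nlinarith [sq_nonneg y])
  have hupper : √(1 + y ^ 2) ≤ 1 + y ^ 2 / 2 :=
    sqrt_le_iff.2 ⟨by positivity, by nlinarith [sq_nonneg y]⟩
  nlinarith

lemma abs_arsinh_add_mul_sqrt_one_add_sq_sub_le (x : ℝ) :
    |arsinh x + x * √(1 + x ^ 2) - 2 * x - x ^ 3 / 3| ≤ |x| ^ 5 / 4 := by
  have hderiv : ∀ y ∈ Metric.closedBall (0 : ℝ) |x|,
      HasDerivWithinAt (fun y => arsinh y + y * √(1 + y ^ 2) - 2 * y - y ^ 3 / 3)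
        (-(√(1 + y ^ 2) - 1) ^ 2) (Metric.closedBall 0 |x|) y := by
    intro y _
    have hsq : √(1 + y ^ 2) ^ 2 = 1 + y ^ 2 := sq_sqrt (by positivity)
    refine ((((hasDerivAt_arsinh_add_mul_sqrt_one_add_sq y).sub
      ((hasDerivAt_id' y).const_mul 2)).sub ((hasDerivAt_pow 3 y).div_const 3)).congr_deriv
        ?_).hasDerivWithinAt
    simp only [Nat.cast_ofNat]
    linear_combination hsq
  have hbound :
      ∀ y ∈ Metric.closedBall (0 : ℝ) |x|, ‖-(√(1 + y ^ 2) - 1) ^ 2‖ ≤ |x| ^ 4 / 4 := by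
    intro y hy
    rw [mem_closedBall_zero_iff, norm_eq_abs] at hy
    rw [norm_neg, norm_pow, norm_eq_abs, sq_abs]
    calc (√(1 + y ^ 2) - 1) ^ 2 ≤ y ^ 4 / 4 := sq_sqrt_one_add_sq_sub_one_le y
      _ ≤ |x| ^ 4 / 4 := by
        rw [← Even.pow_abs ⟨2, rfl⟩ y]
        gcongr
  have := (convex_closedBall (0 : ℝ) |x|).norm_image_sub_le_of_norm_hasDerivWithin_le hderiv
    hbound (Metric.mem_closedBall_self (abs_nonneg x)) (y := x) (by simp)
  simpa [pow_succ, mul_div_right_comm] using this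

lemma sqrt_mul_div_pow {c k t : ℝ} (hc : 0 ≤ c) (hk : 0 ≤ k) (ht : 0 ≤ t) (n : ℕ) :
    √(c * k / t) ^ n = √c ^ n * k ^ ((n : ℝ) / 2) * t ^ (-(n : ℝ) / 2) := by
  rw [sqrt_div' _ ht, sqrt_mul hc, div_pow, mul_pow, neg_div, rpow_neg ht,
    rpow_div_two_eq_sqrt _ hk, rpow_div_two_eq_sqrt _ ht, rpow_natCast, rpow_natCast,
    div_eq_mul_inv]

lemma atkinson_phase_error_eq {k t : ℝ} (hk : 0 < k) (ht : 0 < t) :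
    (2 * t * arsinh √(π * k / (2 * t)) + √(2 * π * k * t + π ^ 2 * k ^ 2) - π / 4) + π / 4
        - 2 * √(2 * π * k * t) - √(2 * π ^ 3) / 6 * k ^ ((3 : ℝ) / 2) * t ^ (-(1 : ℝ) / 2)
      = 2 * t * (arsinh √(π * k / (2 * t)) + √(π * k / (2 * t)) * √(1 + √(π * k / (2 * t)) ^ 2)
          - 2 * √(π * k / (2 * t)) - √(π * k / (2 * t)) ^ 3 / 3) := by
  set x := √(π * k / (2 * t)) with hx
  have hx2 : x ^ 2 = π * k / (2 * t) := sq_sqrt (by positivity)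
  have hlinear : √(2 * π * k * t) = 2 * t * x := by
    rw [sqrt_eq_iff_eq_sq (by positivity) (by positivity), mul_pow, hx2]
    field_simp
  have hsqrt : √(2 * π * k * t + π ^ 2 * k ^ 2) = 2 * t * x * √(1 + x ^ 2) := by
    rw [sqrt_eq_iff_eq_sq (by positivity) (by positivity), mul_pow, mul_pow, hx2,
      sq_sqrt (by positivity)]
    field_simp
  have hcubic :
      √(2 * π ^ 3) / 6 * k ^ ((3 : ℝ) / 2) * t ^ (-(1 : ℝ) / 2) = 2 / 3 * t * x ^ 3 := by
    have hpi : √(2 * π ^ 3) = 4 * √(π / 2) ^ 3 := by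
      rw [sqrt_eq_iff_eq_sq (by positivity) (by positivity), mul_pow, pow_right_comm,
        sq_sqrt (by positivity)]
      ring
    have ht32 : t * t ^ (-(3 : ℝ) / 2) = t ^ (-(1 : ℝ) / 2) := by
      rw [← rpow_one_add' ht.le (by norm_num)]
      norm_num
    rw [hx, show π * k / (2 * t) = π / 2 * k / t by ring,
      sqrt_mul_div_pow (by positivity) hk.le ht.le, hpi, ← ht32]
    push_cast
    ring
  rw [hsqrt, hlinear, hcubic]
  ring

lemma two_mul_mul_sqrt_pow_five {k t : ℝ} (hk : 0 < k) (ht : 0 < t) :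
    2 * t * (√(π * k / (2 * t)) ^ 5 / 4)
      = √(π / 2) ^ 5 / 2 * k ^ ((5 : ℝ) / 2) * t ^ (-(3 : ℝ) / 2) := by
  have ht52 : t * t ^ (-(5 : ℝ) / 2) = t ^ (-(3 : ℝ) / 2) := by
    rw [← rpow_one_add' ht.le (by norm_num)]
    norm_num
  rw [show π * k / (2 * t) = π / 2 * k / t by ring,
    sqrt_mul_div_pow (by positivity) hk.le ht.le, ← ht52]
  push_cast
  ring

theorem atkinson_phase_expansion :
    ∃ C : ℝ, 0 < C ∧ ∀ k t : ℝ, 0 < k → k ≤ t →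
      |(2 * t * Real.arsinh (Real.sqrt (π * k / (2 * t)))
          + Real.sqrt (2 * π * k * t + π ^ 2 * k ^ 2) - π / 4)
        + π / 4 - 2 * Real.sqrt (2 * π * k * t)
        - Real.sqrt (2 * π ^ 3) / 6 * k ^ ((3 : ℝ) / 2) * t ^ (-(1 : ℝ) / 2)|
        ≤ C * k ^ ((5 : ℝ) / 2) * t ^ (-(3 : ℝ) / 2) := by
  refine ⟨√(π / 2) ^ 5 / 2, by positivity, fun k t hk hkt => ?_⟩
  have ht : 0 < t := hk.trans_le hkt
  rw [atkinson_phase_error_eq hk ht, abs_mul, abs_of_pos (by positivity : 0 < 2 * t),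
    ← two_mul_mul_sqrt_pow_five hk ht]
  gcongr
  simpa only [abs_of_nonneg (sqrt_nonneg _)]
    using abs_arsinh_add_mul_sqrt_one_add_sq_sub_le √(π * k / (2 * t))
end
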